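/- arXiv:1011.5305 — 4 statements merged into one kernel-verified Lean document; each statement's English description precedes it below -/
import Mathlib

section
/- For q ∈ ℂ with 0 < |q| < 1, m ∈ ℕ, and α, n ∈ ℕ with α, n ≥ 1, the difference formula holds: q^n β̃_{m,q}^{(α)}(n) - β̃_{m,q}^{(α)} = (q-1) ∑_{l=0}^{n-1} q^l [l]_{q^α}^m + (mα/[α]_q) ∑_{l=0}^{n-1} q^{αl+l} [l]_{q^α}^{m-1}. -/
noncomputable def qnum (q : ℂ) (x : ℕ) : ℂ := (1 - q ^ x) / (1 - q)

noncomputable def qB (q : ℂ) (a n : ℕ) : ℂ :=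
  (1 - q) / (1 - q ^ a) ^ n *
    ∑ l ∈ Finset.range (n + 1),
      (n.choose l : ℂ) * (-1) ^ l * ((a : ℂ) * l + 1) / (1 - q ^ (a * l + 1))

noncomputable def qBpoly (q : ℂ) (a n x : ℕ) : ℂ :=
  (1 - q) / (1 - q ^ a) ^ n *
    ∑ l ∈ Finset.range (n + 1),
      (n.choose l : ℂ) * (-1) ^ l * q ^ (a * l * x) * ((a : ℂ) * l + 1) / (1 - q ^ (a * l + 1))

/-!
Multiplying by `q ^ x` turns `qBpoly q a m x` into a combination of the geometric terms
`r ^ x / (1 - r)` with `r = q ^ (a * l + 1)`, so consecutive differences lose their denominators: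
with `β = qBpoly q a m`, `q ^ (x + 1) β(x + 1) - q ^ x β(x)` is `-(1 - q) q ^ x / (1 - q ^ a) ^ m` times
`∑ C(m, l) (-1) ^ l (a l + 1) t ^ l` with `t = q ^ (a x)`. The binomial theorem and its derivative
evaluate this as `(1 - t) ^ m - a m t (1 - t) ^ (m - 1)`, which is the summand of the right-hand
side, since `[x]_{q^a} = (1 - t) / (1 - q ^ a)`. Summing over `x < n` telescopes, and
`qBpoly q a m 0 = qB q a m`.
-/

open Finset

section Binomial

variable {R : Type*} [CommRing R]

theorem sum_range_choose_mul_neg_one_pow_mul_pow (t : R) (m : ℕ) :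
    ∑ l ∈ range (m + 1), (m.choose l : R) * (-1) ^ l * t ^ l = (1 - t) ^ m := by
  rw [sub_eq_neg_add, add_pow]
  refine sum_congr rfl fun l _ => ?_
  rw [neg_pow]
  ring

theorem sum_range_choose_mul_neg_one_pow_mul_cast_mul_pow (t : R) (m : ℕ) :
    ∑ l ∈ range (m + 1), (m.choose l : R) * (-1) ^ l * l * t ^ l =
      -m * t * (1 - t) ^ (m - 1) := by
  cases m with
  | zero => simp
  | succ k =>
    rw [sum_range_succ', Nat.add_sub_cancel, ← sum_range_choose_mul_neg_one_pow_mul_pow, mul_sum]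
    simp only [Nat.cast_zero, mul_zero, zero_mul, add_zero]
    refine sum_congr rfl fun j _ => ?_
    have hchoose : ((k + 1).choose (j + 1) : R) * (j + 1) = (k + 1) * k.choose j := by
      exact_mod_cast congrArg (Nat.cast : ℕ → R) (Nat.add_one_mul_choose_eq k j).symm
    push_cast
    linear_combination (-1) ^ (j + 1) * t ^ (j + 1) * hchoose

theorem sum_range_choose_mul_neg_one_pow_mul_affine_mul_pow (a t : R) (m : ℕ) :
    ∑ l ∈ range (m + 1), (m.choose l : R) * (-1) ^ l * (a * l + 1) * t ^ l =
      (1 - t) ^ m - a * m * t * (1 - t) ^ (m - 1) := by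
  have hsplit : ∀ l ∈ range (m + 1), (m.choose l : R) * (-1) ^ l * (a * l + 1) * t ^ l =
      a * ((m.choose l : R) * (-1) ^ l * l * t ^ l) + (m.choose l : R) * (-1) ^ l * t ^ l :=
    fun l _ => by ring
  rw [sum_congr rfl hsplit, sum_add_distrib, ← mul_sum,
    sum_range_choose_mul_neg_one_pow_mul_cast_mul_pow, sum_range_choose_mul_neg_one_pow_mul_pow]
  ring

end Binomial

theorem one_sub_pow_ne_zero_of_norm_lt_one {R : Type*} [NormedRing R] [NormOneClass R] {q : R}
    (hq : ‖q‖ < 1) {k : ℕ} (hk : k ≠ 0) : 1 - q ^ k ≠ 0 := by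
  refine sub_ne_zero.mpr fun h => (norm_pow_le' q hk.bot_lt).not_gt ?_
  rw [← h, norm_one]
  exact pow_lt_one₀ (norm_nonneg q) hq hk

theorem pow_mul_qBpoly (q : ℂ) (a m x : ℕ) :
    q ^ x * qBpoly q a m x = (1 - q) / (1 - q ^ a) ^ m *
      ∑ l ∈ range (m + 1),
        (m.choose l : ℂ) * (-1) ^ l * ((a : ℂ) * l + 1) * (q ^ (a * l + 1)) ^ x /
          (1 - q ^ (a * l + 1)) := by
  rw [qBpoly, mul_left_comm, mul_sum]
  congr 1
  refine sum_congr rfl fun l _ => ?_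
  ring

theorem pow_succ_mul_qBpoly_sub_pow_mul_qBpoly {q : ℂ} (hq : ‖q‖ < 1) (m a x : ℕ) :
    q ^ (x + 1) * qBpoly q a m (x + 1) - q ^ x * qBpoly q a m x =
      -((1 - q) / (1 - q ^ a) ^ m) *
        (q ^ x * ∑ l ∈ range (m + 1),
          (m.choose l : ℂ) * (-1) ^ l * ((a : ℂ) * l + 1) * (q ^ (a * x)) ^ l) := by
  rw [pow_mul_qBpoly, pow_mul_qBpoly, ← mul_sub, ← sum_sub_distrib, neg_mul_comm]
  congr 1
  rw [mul_sum, ← sum_neg_distrib]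
  refine sum_congr rfl fun l _ => ?_
  have hden := one_sub_pow_ne_zero_of_norm_lt_one hq ((a * l).add_one_ne_zero)
  field_simp
  ring

theorem pow_succ_mul_qBpoly_sub_pow_mul_qBpoly_eq_qnum {q : ℂ} (hq : ‖q‖ < 1) (m : ℕ) {a : ℕ}
    (ha : a ≠ 0) (x : ℕ) :
    q ^ (x + 1) * qBpoly q a m (x + 1) - q ^ x * qBpoly q a m x =
      (q - 1) * (q ^ x * qnum (q ^ a) x ^ m) +
        ((m : ℂ) * a / qnum q a) * (q ^ (a * x + x) * qnum (q ^ a) x ^ (m - 1)) := by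
  have hq1 : (1 : ℂ) - q ≠ 0 := by simpa using one_sub_pow_ne_zero_of_norm_lt_one hq one_ne_zero
  have hqa := one_sub_pow_ne_zero_of_norm_lt_one hq ha
  rw [pow_succ_mul_qBpoly_sub_pow_mul_qBpoly hq,
    sum_range_choose_mul_neg_one_pow_mul_affine_mul_pow]
  simp only [qnum, ← pow_mul, pow_add, div_pow]
  cases m with
  | zero => field_simp; ring
  | succ k =>
    simp only [Nat.add_sub_cancel]
    push_cast
    field_simp
    ring

theorem qBpoly_zero (q : ℂ) (a m : ℕ) : qBpoly q a m 0 = qB q a m := by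
  simp [qB, qBpoly]

theorem stmt4_general (q : ℂ) (hq1 : ‖q‖ < 1)
    (m a n : ℕ) (ha : 1 ≤ a) :
    q ^ n * qBpoly q a m n - qB q a m =
      (q - 1) * ∑ l ∈ Finset.range n, q ^ l * qnum (q ^ a) l ^ m +
        ((m : ℂ) * a / qnum q a) * ∑ l ∈ Finset.range n, q ^ (a * l + l) * qnum (q ^ a) l ^ (m - 1) := by
  rw [← qBpoly_zero, ← one_mul (qBpoly q a m 0), ← pow_zero q,
    ← sum_range_sub (fun x => q ^ x * qBpoly q a m x), mul_sum, mul_sum, ← sum_add_distrib]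
  exact sum_congr rfl fun x _ =>
    pow_succ_mul_qBpoly_sub_pow_mul_qBpoly_eq_qnum hq1 m (Nat.one_le_iff_ne_zero.mp ha) x

theorem stmt4 (q : ℂ) (hq0 : 0 < ‖q‖) (hq1 : ‖q‖ < 1)
    (m a n : ℕ) (ha : 1 ≤ a) (hn : 1 ≤ n) :
    q ^ n * qBpoly q a m n - qB q a m =
      (q - 1) * ∑ l ∈ Finset.range n, q ^ l * qnum (q ^ a) l ^ m +
        ((m : ℂ) * a / qnum q a) * ∑ l ∈ Finset.range n, q ^ (a * l + l) * qnum (q ^ a) l ^ (m - 1) :=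
  stmt4_general q hq1 m a n ha
end

section
/- For q ∈ ℂ with 0 < |q| < 1 and α ∈ ℕ with α ≥ 1, the weighted q-Bernoulli numbers satisfy the Carlitz-type recurrence: β̃_{0,q}^{(α)} = 1, and for n ≥ 1, q·∑_{l=0}^n C(n,l) q^{αl} β̃_{l,q}^{(α)} - β̃_{n,q}^{(α)} equals α/[α]_q if n = 1 and equals 0 if n > 1. -/
/-! With `c = 1 / (1 - q^α)` and `T l = (α l + 1) / (1 - q^(α l + 1))` one has
`β̃ₙ = (1 - q) cⁿ ∑ C(n,l) (-1)^l T l`. Because `q^α c + 1 = c`, the binomial identity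
`∑ₘ C(n,m) C(m,l) (q^α c)^m = C(n,l) (q^α c)^l c^(n-l)` collapses the umbral sum to
`(1 - q) cⁿ ∑ C(n,l) (-1)^l q^(α l + 1) T l`. Subtracting `β̃ₙ`, the factor `q^(α l + 1) - 1`
cancels the denominator of `T l`, leaving `-(1 - q) cⁿ ∑ C(n,l) (-1)^l (α l + 1)`: an `n`-th finite
difference of a linear function, equal to `α (1 - q) c = α / [α]_q` for `n = 1` and to `0` for
`n ≥ 2`. -/

open Finset

theorem one_sub_pow_ne_zero {K : Type*} [NormedDivisionRing K] {q : K} (hq : ‖q‖ < 1)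
    {k : ℕ} (hk : k ≠ 0) : 1 - q ^ k ≠ 0 := by
  rw [sub_ne_zero]
  intro h
  have : ‖q ^ k‖ < 1 := by rw [norm_pow]; exact pow_lt_one₀ (norm_nonneg q) hq hk
  simp [← h] at this

section BinomialTransform

variable {R : Type*} [CommSemiring R]

theorem sum_Ico_choose_mul_choose_mul_pow {n l : ℕ} (hl : l ≤ n) (x : R) :
    ∑ m ∈ Ico l (n + 1), (n.choose m : R) * m.choose l * x ^ m
      = n.choose l * x ^ l * (x + 1) ^ (n - l) := by
  rw [sum_Ico_eq_sum_range, Nat.sub_add_comm hl, add_pow, mul_sum]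
  refine sum_congr rfl fun j hj => ?_
  have hchoose : (n.choose (l + j) : R) * (l + j).choose l = n.choose l * (n - l).choose j := by
    have := Nat.choose_mul (n := n) (Nat.le_add_right l j)
    rw [Nat.add_sub_cancel_left] at this
    rw [← Nat.cast_mul, ← Nat.cast_mul, this]
  rw [hchoose, pow_add]
  ring

theorem sum_choose_mul_pow_mul_sum_choose {y c : R} (hyc : y * c + 1 = c) (f : ℕ → R) (n : ℕ) :
    ∑ m ∈ range (n + 1), (n.choose m : R) * (y * c) ^ m * ∑ l ∈ range (m + 1), m.choose l * f l
      = c ^ n * ∑ l ∈ range (n + 1), n.choose l * y ^ l * f l := by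
  simp_rw [mul_sum, range_eq_Ico]
  rw [← sum_Ico_Ico_comm]
  refine sum_congr rfl fun l hl => ?_
  have hln : l ≤ n := Nat.lt_succ_iff.mp (mem_Ico.mp hl).2
  have hinner := sum_Ico_choose_mul_choose_mul_pow hln (y * c)
  calc ∑ m ∈ Ico l (n + 1), (n.choose m : R) * (y * c) ^ m * (m.choose l * f l)
      = (∑ m ∈ Ico l (n + 1), (n.choose m : R) * m.choose l * (y * c) ^ m) * f l := by
        rw [sum_mul]; exact sum_congr rfl fun m _ => by ring
    _ = c ^ n * (n.choose l * y ^ l * f l) := by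
        rw [hinner, hyc, ← Nat.add_sub_cancel' hln, pow_add, Nat.add_sub_cancel_left]; ring

end BinomialTransform

section AlternatingSums

variable {R : Type*} [CommRing R]

theorem sum_range_choose_mul_neg_one_pow (n : ℕ) :
    ∑ l ∈ range (n + 1), (n.choose l : R) * (-1) ^ l = if n = 0 then 1 else 0 := by
  have := congrArg (Int.cast : ℤ → R) (Int.alternating_sum_range_choose (n := n))
  push_cast at this
  simpa [mul_comm] using this

theorem sum_range_choose_mul_neg_one_pow_mul_cast (n : ℕ) :
    ∑ l ∈ range (n + 1), (n.choose l : R) * (-1) ^ l * l = if n = 1 then -1 else 0 := by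
  rcases n with _ | m
  · simp
  rw [sum_range_succ']
  have hterm : ∀ k, ((m + 1).choose (k + 1) : R) * (-1) ^ (k + 1) * ↑(k + 1)
      = -((m + 1) * (m.choose k * (-1) ^ k)) := by
    intro k
    have := congrArg (Nat.cast : ℕ → R) (Nat.add_one_mul_choose_eq m k)
    push_cast at this ⊢
    linear_combination (-1) ^ k * this
  simp_rw [hterm, sum_neg_distrib, ← mul_sum, sum_range_choose_mul_neg_one_pow]
  rcases m with _ | m <;> simp

theorem sum_range_choose_mul_neg_one_pow_mul_linear {n : ℕ} (hn : n ≠ 0) (a b : R) :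
    ∑ l ∈ range (n + 1), (n.choose l : R) * (-1) ^ l * (a * l + b)
      = if n = 1 then -a else 0 := by
  have hsplit : ∀ l, (n.choose l : R) * (-1) ^ l * (a * l + b)
      = a * ((n.choose l : R) * (-1) ^ l * l) + b * ((n.choose l : R) * (-1) ^ l) :=
    fun l => by ring
  simp_rw [hsplit, sum_add_distrib, ← mul_sum, sum_range_choose_mul_neg_one_pow_mul_cast,
    sum_range_choose_mul_neg_one_pow, if_neg hn]
  split_ifs <;> simp

end AlternatingSums

section WeightedQBernoulli

variable {q : ℂ} {a : ℕ}

theorem qB_eq_mul_sum (n : ℕ) :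
    qB q a n = (1 - q) * (1 - q ^ a)⁻¹ ^ n * ∑ l ∈ range (n + 1),
      n.choose l * ((-1) ^ l * ((a * l + 1) / (1 - q ^ (a * l + 1)))) := by
  rw [qB, div_eq_mul_inv, inv_pow]
  exact congrArg _ (sum_congr rfl fun l _ => by ring)

theorem qB_zero (hq : 1 - q ≠ 0) : qB q a 0 = 1 := by
  simp [qB_eq_mul_sum, hq]

theorem mul_sum_choose_mul_pow_mul_qB (ha : 1 - q ^ a ≠ 0) (n : ℕ) :
    q * ∑ m ∈ range (n + 1), (n.choose m : ℂ) * q ^ (a * m) * qB q a m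
      = (1 - q) * (1 - q ^ a)⁻¹ ^ n * ∑ l ∈ range (n + 1),
        n.choose l * q ^ (a * l + 1) * ((-1) ^ l * ((a * l + 1) / (1 - q ^ (a * l + 1)))) := by
  have hyc : q ^ a * (1 - q ^ a)⁻¹ + 1 = (1 - q ^ a)⁻¹ := by field_simp; ring
  have htransform := sum_choose_mul_pow_mul_sum_choose hyc
    (fun l => (-1) ^ l * ((a * l + 1) / (1 - q ^ (a * l + 1)))) n
  have hterm : ∀ m, (n.choose m : ℂ) * q ^ (a * m) * qB q a m = (1 - q) * (n.choose m *
      (q ^ a * (1 - q ^ a)⁻¹) ^ m * ∑ l ∈ range (m + 1),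
        m.choose l * ((-1) ^ l * ((a * l + 1) / (1 - q ^ (a * l + 1))))) := fun m => by
    rw [qB_eq_mul_sum, mul_pow, pow_mul]; ring
  rw [sum_congr rfl fun m _ => hterm m, ← mul_sum, htransform]
  simp only [mul_sum]
  exact sum_congr rfl fun l _ => by rw [pow_succ, pow_mul]; ring

theorem mul_sum_choose_mul_pow_mul_qB_sub_qB (hq : ‖q‖ < 1) (ha : a ≠ 0) {n : ℕ} (hn : n ≠ 0) :
    q * ∑ m ∈ range (n + 1), (n.choose m : ℂ) * q ^ (a * m) * qB q a m - qB q a n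
      = (1 - q) * (1 - q ^ a)⁻¹ ^ n * if n = 1 then (a : ℂ) else 0 := by
  have hterm : ∀ l : ℕ, (n.choose l : ℂ) * q ^ (a * l + 1) *
        ((-1) ^ l * ((a * l + 1) / (1 - q ^ (a * l + 1))))
      - n.choose l * ((-1) ^ l * ((a * l + 1) / (1 - q ^ (a * l + 1))))
      = -(n.choose l * (-1) ^ l * (a * l + 1)) := fun l => by
    have := one_sub_pow_ne_zero hq (Nat.succ_ne_zero (a * l))
    field_simp
    ring
  rw [mul_sum_choose_mul_pow_mul_qB (one_sub_pow_ne_zero hq ha), qB_eq_mul_sum, ← mul_sub,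
    ← sum_sub_distrib, sum_congr rfl fun l _ => hterm l, sum_neg_distrib,
    sum_range_choose_mul_neg_one_pow_mul_linear hn]
  split_ifs <;> simp

end WeightedQBernoulli

theorem stmt6_general (q : ℂ) (hq1 : ‖q‖ < 1)
    (a : ℕ) (ha : 1 ≤ a) :
    qB q a 0 = 1 ∧
    ∀ n : ℕ, 1 ≤ n →
      q * (∑ l ∈ Finset.range (n + 1), (n.choose l : ℂ) * q ^ (a * l) * qB q a l) - qB q a n =
        if n = 1 then (a : ℂ) / qnum q a else 0 := by
  refine ⟨qB_zero (by simpa using one_sub_pow_ne_zero hq1 one_ne_zero), fun n hn => ?_⟩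
  rw [mul_sum_choose_mul_pow_mul_qB_sub_qB hq1 (by omega) (by omega : n ≠ 0)]
  split_ifs with h1
  · subst h1; rw [qnum, div_div_eq_mul_div]; ring
  · simp

theorem stmt6 (q : ℂ) (hq0 : 0 < ‖q‖) (hq1 : ‖q‖ < 1)
    (a : ℕ) (ha : 1 ≤ a) :
    qB q a 0 = 1 ∧
    ∀ n : ℕ, 1 ≤ n →
      q * (∑ l ∈ Finset.range (n + 1), (n.choose l : ℂ) * q ^ (a * l) * qB q a l) - qB q a n =
        if n = 1 then (a : ℂ) / qnum q a else 0 :=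
  stmt6_general q hq1 a ha
end

section
/- For q ∈ ℂ with q ≠ 0 and q not a root of unity, α ∈ ℕ with α ≥ 1, and n ∈ ℕ, the following three quantities are equal: ∑_{l=0}^n C(n,l)(-1)^l β̃_{l,q}^{(α)}, (-1)^n q^{αn} β̃_{n,q}^{(α)}(-1), and β̃_{n,q^{-1}}^{(α)}(2). -/
/-!
Write `β̃_{n,Q}(y) = (1 - Q^α)^{-n} ∑_l C(n,l) (-1)^l (Q^{αy})^l w_Q(l)` with
`w_Q(l) = (1 - Q)(αl + 1)/(1 - Q^{αl+1})`. Substituting this for `β̃_{l,q}` in the binomial sum and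
exchanging the two sums, the first equality becomes the identity
`∑_l C(n,l) C(l,j) x^l = C(n,j) x^j (1 + x)^{n-j}` at `x = -1/(1 - q^α)`, where `1 + x = q^α x`.
The second equality is the reflection `β̃_{n,q⁻¹}(y) = (-1)^n q^{αn} β̃_{n,q}(1 - y)`, which comes
from `w_{q⁻¹}(l) = q^{αl} w_q(l)`.
-/

noncomputable def qnumZ (Q : ℂ) (y : ℤ) : ℂ := (1 - Q ^ y) / (1 - Q)

/-- Weighted q-Bernoulli polynomial with integer argument `y`. -/
noncomputable def qBZ (Q : ℂ) (a n : ℕ) (y : ℤ) : ℂ :=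
  (1 - Q) / (1 - Q ^ a) ^ n *
    ∑ l ∈ Finset.range (n + 1),
      (n.choose l : ℂ) * (-1) ^ l * Q ^ ((a : ℤ) * l * y) * ((a : ℂ) * l + 1) /
        (1 - Q ^ (a * l + 1))

open Finset

theorem sum_choose_mul_choose_mul_pow {R : Type*} [CommSemiring R] (x : R) {n j : ℕ}
    (hj : j ≤ n) :
    ∑ l ∈ range (n + 1), (n.choose l : R) * l.choose j * x ^ l =
      n.choose j * x ^ j * (1 + x) ^ (n - j) := by
  rw [← sum_range_add_sum_Ico _ (by omega : j ≤ n + 1), sum_Ico_eq_sum_range,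
    sum_eq_zero fun l hl => by rw [Nat.choose_eq_zero_of_lt (mem_range.mp hl)]; simp,
    zero_add, show n + 1 - j = n - j + 1 by omega, add_comm 1 x, add_pow, mul_sum]
  refine sum_congr rfl fun m hm => ?_
  have hchoose : (n.choose (j + m) : R) * (j + m).choose j = n.choose j * (n - j).choose m := by
    rw [← Nat.cast_mul, Nat.choose_mul (by omega), Nat.add_sub_cancel_left, Nat.cast_mul]
  rw [hchoose, one_pow, mul_one, pow_add]
  ring

theorem sum_choose_mul_pow_mul_sum_choose_s9 {R : Type*} [CommSemiring R] (x : R) (d : ℕ → R)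
    (n : ℕ) :
    ∑ l ∈ range (n + 1), (n.choose l : R) * x ^ l * ∑ j ∈ range (l + 1), (l.choose j : R) * d j =
      ∑ j ∈ range (n + 1), (n.choose j : R) * x ^ j * (1 + x) ^ (n - j) * d j := by
  have hextend : ∀ l ∈ range (n + 1), ∑ j ∈ range (l + 1), (l.choose j : R) * d j =
      ∑ j ∈ range (n + 1), (l.choose j : R) * d j := fun l hl =>
    sum_subset (range_subset_range.mpr (by simp at hl; omega)) fun j _ hj => by
      rw [Nat.choose_eq_zero_of_lt (by simpa using hj)]; simp
  rw [sum_congr rfl fun l hl => by rw [hextend l hl, mul_sum], sum_comm]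
  refine sum_congr rfl fun j hj => ?_
  rw [← sum_choose_mul_choose_mul_pow x (by simpa [Nat.lt_succ_iff] using hj), sum_mul]
  exact sum_congr rfl fun l _ => by ring

theorem binomial_transform_div_one_sub_pow {K : Type*} [Field K] {t : K} (ht0 : t ≠ 0)
    (ht1 : t ≠ 1) (w : ℕ → K) (n : ℕ) :
    ∑ l ∈ range (n + 1), (n.choose l : K) * (-1) ^ l *
        (((1 - t) ^ l)⁻¹ * ∑ j ∈ range (l + 1), (l.choose j : K) * (-1) ^ j * w j) =
      (-1) ^ n * t ^ n *
        (((1 - t) ^ n)⁻¹ * ∑ j ∈ range (n + 1), (n.choose j : K) * (-1) ^ j * t⁻¹ ^ j * w j) := by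
  set x : K := -(1 - t)⁻¹
  have hx : ∀ k : ℕ, x ^ k = (-1) ^ k * ((1 - t) ^ k)⁻¹ := fun k => by
    rw [neg_pow, inv_pow]
  have hsucc : 1 + x = x * t := by
    simp only [x]; field_simp; ring
  calc _ = ∑ l ∈ range (n + 1), (n.choose l : K) * x ^ l *
          ∑ j ∈ range (l + 1), (l.choose j : K) * ((-1) ^ j * w j) :=
        sum_congr rfl fun l _ => by simp only [hx, mul_assoc]
    _ = ∑ j ∈ range (n + 1), (n.choose j : K) * x ^ j * (x * t) ^ (n - j) * ((-1) ^ j * w j) := by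
        rw [sum_choose_mul_pow_mul_sum_choose_s9, hsucc]
    _ = _ := by
        rw [mul_sum, mul_sum]
        refine sum_congr rfl fun j hj => ?_
        obtain ⟨m, rfl⟩ : ∃ m, n = j + m := ⟨n - j, by simp at hj; omega⟩
        rw [Nat.add_sub_cancel_left, mul_pow, hx, hx, pow_add t, inv_pow]
        field_simp
        ring

def qWeight {K : Type*} [Field K] (Q : K) (a l : ℕ) : K :=
  (1 - Q) * ((a : K) * l + 1) / (1 - Q ^ (a * l + 1))

theorem qWeight_inv {K : Type*} [Field K] {Q : K} (hQ : Q ≠ 0) (a l : ℕ) :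
    qWeight Q⁻¹ a l = Q ^ (a * l) * qWeight Q a l := by
  have hnum : 1 - Q⁻¹ = -Q⁻¹ * (1 - Q) := by field_simp; ring
  have hden : 1 - Q⁻¹ ^ (a * l + 1) = -Q⁻¹ ^ (a * l + 1) * (1 - Q ^ (a * l + 1)) := by
    rw [inv_pow]; field_simp; ring
  have hratio : -Q⁻¹ / -Q⁻¹ ^ (a * l + 1) = Q ^ (a * l) := by
    rw [neg_div_neg_eq, inv_pow, pow_succ]; field_simp
  rw [qWeight, qWeight, hnum, hden, mul_assoc, mul_div_mul_comm, hratio, mul_div_assoc]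

theorem qBZ_eq (Q : ℂ) (a n : ℕ) (y : ℤ) :
    qBZ Q a n y = ((1 - Q ^ a) ^ n)⁻¹ *
      ∑ l ∈ range (n + 1), (n.choose l : ℂ) * (-1) ^ l * (Q ^ ((a : ℤ) * y)) ^ l * qWeight Q a l := by
  rw [qBZ, mul_sum, mul_sum]
  refine sum_congr rfl fun l _ => ?_
  have hpow : Q ^ ((a : ℤ) * l * y) = (Q ^ ((a : ℤ) * y)) ^ l := by
    rw [← zpow_natCast, ← zpow_mul, mul_right_comm]
  rw [qWeight, hpow]
  ring

theorem qBZ_inv (q : ℂ) (hq : q ≠ 0) (a n : ℕ) (y : ℤ) :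
    qBZ q⁻¹ a n y = (-1) ^ n * q ^ (a * n) * qBZ q a n (1 - y) := by
  have hfactor : ((1 - q⁻¹ ^ a) ^ n)⁻¹ = (-1) ^ n * q ^ (a * n) * ((1 - q ^ a) ^ n)⁻¹ := by
    have : 1 - q⁻¹ ^ a = -(q ^ a)⁻¹ * (1 - q ^ a) := by rw [inv_pow]; field_simp; ring
    rw [this, mul_pow, mul_inv, ← inv_pow, inv_neg, inv_inv, neg_pow, pow_mul]
  rw [qBZ_eq, qBZ_eq, hfactor, mul_assoc]
  congr 2
  refine sum_congr rfl fun l _ => ?_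
  have hpow : q⁻¹ ^ ((a : ℤ) * y) * q ^ a = q ^ ((a : ℤ) * (1 - y)) := by
    rw [inv_zpow', ← zpow_natCast, ← zpow_add₀ hq]
    ring_nf
  rw [qWeight_inv hq, pow_mul q a l, ← hpow, mul_pow]
  ring

theorem stmt9 (q : ℂ) (hq0 : q ≠ 0) (hq1 : ∀ k : ℕ, 0 < k → q ^ k ≠ 1)
    (a : ℕ) (ha : 1 ≤ a) (n : ℕ) :
    (∑ l ∈ Finset.range (n + 1), (n.choose l : ℂ) * (-1) ^ l * qBZ q a l 0) =
        (-1) ^ n * q ^ (a * n) * qBZ q a n (-1) ∧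
      (-1) ^ n * q ^ (a * n) * qBZ q a n (-1) = qBZ q⁻¹ a n 2 := by
  refine ⟨?_, by rw [qBZ_inv q hq0]; norm_num⟩
  have hzpow : q ^ ((a : ℤ) * (-1)) = (q ^ a)⁻¹ := by rw [mul_neg_one, zpow_neg, zpow_natCast]
  simp only [qBZ_eq, mul_zero, zpow_zero, one_pow, mul_one, hzpow, pow_mul]
  exact binomial_transform_div_one_sub_pow (pow_ne_zero a hq0) (hq1 a ha) (qWeight q a) n
end

section
/- For q ∈ ℂ with 0 < |q| < 1 and n ∈ ℕ with n ≥ 1, the weight-1 q-Bernoulli number β̃_{n,q}^{(1)} = (1-q)/(1-q)^n ∑_{l=0}^n C(n,l)(-1)^l (l+1)/(1-q^{l+1}) satisfies the Carlitz recurrence: β̃_{0,q}^{(1)} = 1 and q·∑_{l=0}^n C(n,l) q^l β̃_{l,q}^{(1)} - β̃_{n,q}^{(1)} equals 1 if n = 1 and 0 if n > 1; i.e., the weight-1 numbers coincide with Carlitz's q-Bernoulli numbers β_{n,q}. -/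
open Finset

theorem Int.alternating_sum_range_mul_choose (n : ℕ) :
    ∑ j ∈ Finset.range (n + 1), ((-1) ^ j * j * n.choose j : ℤ) = -if n = 1 then 1 else 0 := by
  cases n with
  | zero => simp
  | succ m =>
    have hterm (k : ℕ) : ((-1) ^ (k + 1) * ↑(k + 1) * ↑((m + 1).choose (k + 1)) : ℤ) =
        -(m + 1) * ((-1) ^ k * m.choose k) := by
      have := Nat.add_one_mul_choose_eq m k
      rw [mul_comm _ (k + 1)] at this
      rw [mul_assoc, ← Nat.cast_mul, ← this]
      push_cast; ring
    rw [sum_range_succ', sum_congr rfl fun k _ => hterm k, ← mul_sum,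
      Int.alternating_sum_range_choose]
    split_ifs <;> simp_all

section Binomial

variable {R : Type*} [CommSemiring R]

theorem sum_range_choose_mul_choose_mul_pow_mul_pow (x y : R) (n j : ℕ) :
    ∑ l ∈ range (n + 1), (n.choose l * l.choose j : R) * x ^ l * y ^ (n - l) =
      n.choose j * x ^ j * (x + y) ^ (n - j) := by
  rcases le_or_gt j n with hjn | hnj
  · obtain ⟨m, rfl⟩ := Nat.exists_eq_add_of_le hjn
    have hlow : ∀ l ∈ range j,
        (((j + m).choose l * l.choose j : ℕ) : R) * x ^ l * y ^ (j + m - l) = 0 := by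
      intro l hl
      rw [Nat.choose_eq_zero_of_lt (mem_range.1 hl)]
      simp
    have hhigh (k : ℕ) (hk : k ∈ range (m + 1)) :
        (((j + m).choose (j + k) * (j + k).choose j : ℕ) : R) * x ^ (j + k) *
            y ^ (j + m - (j + k)) =
          (j + m).choose j * x ^ j * (x ^ k * y ^ (m - k) * m.choose k) := by
      rw [Nat.choose_mul (by omega)]
      simp only [Nat.add_sub_cancel_left, Nat.add_sub_add_left, Nat.cast_mul, pow_add]
      ring
    simp_rw [← Nat.cast_mul]
    rw [Nat.add_sub_cancel_left, add_pow, mul_sum, add_assoc, sum_range_add, sum_eq_zero hlow,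
      zero_add]
    exact sum_congr rfl hhigh
  · rw [Nat.choose_eq_zero_of_lt hnj, Nat.cast_zero, zero_mul, zero_mul]
    refine sum_eq_zero fun l hl => ?_
    rw [Nat.choose_eq_zero_of_lt ((mem_range.1 hl).trans_le hnj)]
    simp

theorem sum_range_choose_mul_pow_mul_sum_choose (x y : R) (a : ℕ → R) (n : ℕ) :
    ∑ l ∈ range (n + 1), n.choose l * x ^ l * y ^ (n - l) * ∑ j ∈ range (l + 1), l.choose j * a j =
      ∑ j ∈ range (n + 1), n.choose j * x ^ j * (x + y) ^ (n - j) * a j := by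
  have hextend (l : ℕ) (hl : l ∈ range (n + 1)) :
      ∑ j ∈ range (l + 1), (l.choose j : R) * a j = ∑ j ∈ range (n + 1), l.choose j * a j := by
    refine sum_subset (range_subset_range.2 (by grind)) fun j _ hj => ?_
    rw [Nat.choose_eq_zero_of_lt (by grind)]
    simp
  rw [sum_congr rfl fun l hl => by rw [hextend l hl, mul_sum], sum_comm]
  refine sum_congr rfl fun j _ => ?_
  rw [← sum_range_choose_mul_choose_mul_pow_mul_pow, sum_mul]
  exact sum_congr rfl fun l _ => by ring

end Binomial

theorem pow_ne_one_of_norm_lt_one {𝕜 : Type*} [NormedDivisionRing 𝕜] {q : 𝕜} (hq : ‖q‖ < 1)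
    {k : ℕ} (hk : k ≠ 0) : q ^ k ≠ 1 := by
  intro h
  have := pow_lt_one₀ (norm_nonneg q) hq hk
  rw [← norm_pow, h, norm_one] at this
  exact lt_irrefl 1 this

noncomputable def qBOneCoeff (q : ℂ) (j : ℕ) : ℂ := (-1) ^ j * ((j + 1) / (1 - q ^ (j + 1)))

theorem qB_one_eq (q : ℂ) (m : ℕ) :
    qB q 1 m = (1 - q) / (1 - q) ^ m * ∑ j ∈ range (m + 1), m.choose j * qBOneCoeff q j := by
  simp only [qB, qBOneCoeff, pow_one, Nat.cast_one, one_mul, mul_div_assoc, mul_assoc]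

theorem qB_one_zero {q : ℂ} (hq : q ≠ 1) : qB q 1 0 = 1 := by
  have : 1 - q ≠ 0 := sub_ne_zero.2 hq.symm
  simp [qB_one_eq, qBOneCoeff, this]

theorem sum_choose_mul_pow_mul_qB_one {q : ℂ} (hq : q ≠ 1) (n : ℕ) :
    ∑ l ∈ range (n + 1), n.choose l * q ^ l * qB q 1 l =
      (1 - q) / (1 - q) ^ n * ∑ j ∈ range (n + 1), n.choose j * q ^ j * qBOneCoeff q j := by
  have h1q : 1 - q ≠ 0 := sub_ne_zero.2 hq.symm
  have hterm (l : ℕ) (hl : l ∈ range (n + 1)) : n.choose l * q ^ l * qB q 1 l =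
      (1 - q) / (1 - q) ^ n * (n.choose l * q ^ l * (1 - q) ^ (n - l) *
        ∑ j ∈ range (l + 1), l.choose j * qBOneCoeff q j) := by
    rw [qB_one_eq, ← pow_sub_mul_pow (1 - q) (mem_range_succ_iff.1 hl)]
    field_simp
  rw [sum_congr rfl hterm, ← mul_sum, sum_range_choose_mul_pow_mul_sum_choose]
  simp

theorem sub_one_mul_qBOneCoeff {q : ℂ} {j : ℕ} (hq : q ^ (j + 1) ≠ 1) :
    (q ^ (j + 1) - 1) * qBOneCoeff q j = -((-1) ^ j * (j + 1)) := by
  have : 1 - q ^ (j + 1) ≠ 0 := sub_ne_zero.2 hq.symm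
  rw [qBOneCoeff]
  field_simp
  ring

theorem sum_choose_mul_pow_succ_sub_one_mul_qBOneCoeff {q : ℂ} (hq : ∀ k, q ^ (k + 1) ≠ 1)
    {n : ℕ} (hn : n ≠ 0) :
    ∑ j ∈ range (n + 1), n.choose j * ((q ^ (j + 1) - 1) * qBOneCoeff q j) =
      if n = 1 then 1 else 0 := by
  have hℤ : ∑ j ∈ range (n + 1), ((-1) ^ j * (j + 1) * n.choose j : ℤ) =
      -(if n = 1 then 1 else 0) := by
    simp only [mul_add, add_mul, mul_one, sum_add_distrib, Int.alternating_sum_range_mul_choose,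
      Int.alternating_sum_range_choose_of_ne hn, add_zero]
  have hℂ : ∑ j ∈ range (n + 1), ((-1) ^ j * (j + 1) * n.choose j : ℂ) =
      -(if n = 1 then 1 else 0) := mod_cast hℤ
  rw [← neg_neg (ite _ _ _), ← hℂ, ← sum_neg_distrib]
  exact sum_congr rfl fun j _ => by rw [sub_one_mul_qBOneCoeff (hq j)]; ring

theorem stmt13_general (q : ℂ) (hq1 : ‖q‖ < 1)
    (n : ℕ) (hn : 1 ≤ n) :
    qB q 1 0 = 1 ∧
    q * (∑ l ∈ Finset.range (n + 1), (n.choose l : ℂ) * q ^ l * qB q 1 l) - qB q 1 n =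
      if n = 1 then 1 else 0 := by
  have hq_pow (k : ℕ) : q ^ (k + 1) ≠ 1 := pow_ne_one_of_norm_lt_one hq1 k.succ_ne_zero
  have hq : q ≠ 1 := by simpa using hq_pow 0
  refine ⟨qB_one_zero hq, ?_⟩
  calc q * (∑ l ∈ range (n + 1), (n.choose l : ℂ) * q ^ l * qB q 1 l) - qB q 1 n
      = (1 - q) / (1 - q) ^ n *
          ∑ j ∈ range (n + 1), n.choose j * ((q ^ (j + 1) - 1) * qBOneCoeff q j) := by
        rw [sum_choose_mul_pow_mul_qB_one hq, qB_one_eq]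
        simp only [mul_sum, ← sum_sub_distrib]
        exact sum_congr rfl fun j _ => by ring
    _ = if n = 1 then 1 else 0 := by
        rw [sum_choose_mul_pow_succ_sub_one_mul_qBOneCoeff hq_pow (by omega)]
        split_ifs with h
        · simp [h, sub_ne_zero.2 hq.symm]
        · simp

theorem stmt13 (q : ℂ) (hq0 : 0 < ‖q‖) (hq1 : ‖q‖ < 1)
    (n : ℕ) (hn : 1 ≤ n) :
    qB q 1 0 = 1 ∧
    q * (∑ l ∈ Finset.range (n + 1), (n.choose l : ℂ) * q ^ l * qB q 1 l) - qB q 1 n =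
      if n = 1 then 1 else 0 :=
  stmt13_general q hq1 n hn
end
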